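/- For all positive integers x and k, the sum over i from 1 to x of M(⌊x/i⌋)·i^k equals B(x) = Σ_{i=1}^x J_k(i), where J_k is the Jordan totient function. -/

import Mathlib

open Finset ArithmeticFunction

/-- The Mertens function `M(n) = ∑_{k=1}^n μ(k)`. -/
def mertens (n : ℕ) : ℤ := ∑ k ∈ Finset.Icc 1 n, ArithmeticFunction.moebius k

/-- The Jordan totient function `J_k(n) = ∑_{d ∣ n} μ(d) (n/d)^k`. -/
def jordanTotient (k : ℕ) (n : ℕ) : ℤ :=
  ∑ d ∈ n.divisors, ArithmeticFunction.moebius d * ((n / d : ℕ) : ℤ) ^ k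

/-!
Both sides are partial sums of the Dirichlet convolution `μ * Id^k`: the right side term by term,
since `J_k = μ * Id^k`, and the left side after swapping the order of summation in
`∑_{d i ≤ x} μ(d) i^k`, the inner sum over `d ≤ x / i` being `M(x / i)`.
-/

open scoped ArithmeticFunction.Moebius

theorem Nat.Icc_one_eq_Ioc_zero (n : ℕ) : Icc 1 n = Ioc 0 n :=
  Icc_add_one_left_eq_Ioc 0 n

theorem ArithmeticFunction.natCoe_pow_apply {k n : ℕ} (hn : n ≠ 0) :
    (pow k : ArithmeticFunction ℤ) n = (n : ℤ) ^ k := by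
  rw [natCoe_apply, pow_apply, if_neg (by tauto), Nat.cast_pow]

theorem sum_mertens_div_mul_eq_sum_moebius_mul (f : ArithmeticFunction ℤ) (x : ℕ) :
    ∑ i ∈ Icc 1 x, mertens (x / i) * f i = ∑ n ∈ Icc 1 x, (μ * f) n := by
  simp only [mertens, Nat.Icc_one_eq_Ioc_zero, mul_comm μ, sum_Ioc_mul_eq_sum_sum, mul_comm (f _)]

theorem jordanTotient_eq_moebius_mul_pow (k n : ℕ) :
    jordanTotient k n = (μ * (pow k : ArithmeticFunction ℤ)) n := by
  rw [jordanTotient, mul_apply,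
    Nat.sum_divisorsAntidiagonal (fun a b ↦ μ a * (pow k : ArithmeticFunction ℤ) b)]
  refine sum_congr rfl fun d hd ↦ ?_
  rw [natCoe_pow_apply (Nat.div_pos (Nat.divisor_le hd) (Nat.pos_of_mem_divisors hd)).ne']

theorem stmt8_general (x k : ℕ) :
    ∑ i ∈ Finset.Icc 1 x, mertens (x / i) * (i : ℤ) ^ k =
      ∑ i ∈ Finset.Icc 1 x, jordanTotient k i := by
  simp only [jordanTotient_eq_moebius_mul_pow, ← sum_mertens_div_mul_eq_sum_moebius_mul]
  refine sum_congr rfl fun i hi ↦ ?_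
  rw [natCoe_pow_apply (Nat.one_le_iff_ne_zero.mp (mem_Icc.mp hi).1)]

theorem stmt8 (x k : ℕ) (hx : 0 < x) (hk : 0 < k) :
    ∑ i ∈ Finset.Icc 1 x, mertens (x / i) * (i : ℤ) ^ k =
      ∑ i ∈ Finset.Icc 1 x, jordanTotient k i :=
  stmt8_general x k
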